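/- Let (G, +) be a Boolean group, i.e., an abelian group in which every element satisfies x + x = 0. Then for all elements r, s, t ∈ G, the multisets ⟨r, s, t⟩ and ⟨r, r + s, r + t⟩ have the same deck. Moreover, if r ≠ 0 and r + s ≠ t, then ⟨r, s, t⟩ ≠ ⟨r, r + s, r + t⟩. -/

import Mathlib

/-- The multiset ⟨m 1, …, m n⟩ determined by a tuple. -/
def msOfFn {G : Type*} {n : ℕ} (m : Fin n → G) : Multiset G := (List.ofFn m : List G)

/-- The card M_{i,j} of the multiset ⟨m 1, …, m n⟩ (for a commutative groupoid
operation `op`): replace the two entries at positions `i` and `j` by their sum. -/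
def mcard {G : Type*} (op : G → G → G) {n : ℕ} (m : Fin n → G) (i j : Fin n) :
    Multiset G :=
  ((Finset.univ.filter (fun k : Fin n => k ≠ i ∧ k ≠ j)).val.map m) + {op (m i) (m j)}

/-- The deck of the multiset ⟨m 1, …, m n⟩: the multiset of all C(n,2) cards. -/
def mdeck {G : Type*} (op : G → G → G) {n : ℕ} (m : Fin n → G) :
    Multiset (Multiset G) :=
  (Finset.univ.filter (fun p : Fin n × Fin n => p.1 < p.2)).val.map
    (fun p => mcard op m p.1 p.2)

/-!
When `x + x = 0` for all `x`, merging `r` with `r + x` gives back `x`. Hence merging `r` with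
`r + s` (resp. `r + t`) in `⟨r, r + s, r + t⟩` gives the card `⟨s, r + t⟩` (resp. `⟨r + s, t⟩`),
which is the card of `⟨r, s, t⟩` obtained by merging `r` with `t` (resp. `s`); the remaining
cards are both `⟨r, s + t⟩`.
-/

theorem mdeck_fin_three {G : Type*} (op : G → G → G) (a b c : G) :
    mdeck op ![a, b, c] = {{c, op a b}, {b, op a c}, {a, op b c}} := by
  have pairs : (Finset.univ.filter (fun p : Fin 3 × Fin 3 => p.1 < p.2)).val =
      {(0, 1), (0, 2), (1, 2)} := by decide
  have rest01 : (Finset.univ.filter (fun k : Fin 3 => k ≠ 0 ∧ k ≠ 1)).val = {2} := by decide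
  have rest02 : (Finset.univ.filter (fun k : Fin 3 => k ≠ 0 ∧ k ≠ 2)).val = {1} := by decide
  have rest12 : (Finset.univ.filter (fun k : Fin 3 => k ≠ 1 ∧ k ≠ 2)).val = {0} := by decide
  simp only [mdeck, mcard]
  rw [pairs]
  simp only [Multiset.insert_eq_cons, Multiset.map_cons, Multiset.map_singleton, rest01, rest02,
    rest12, Matrix.cons_val_zero, Matrix.cons_val_one, Matrix.cons_val_two, Matrix.head_cons,
    Matrix.tail_cons, Multiset.singleton_add]

theorem mdeck_add_left_eq_of_add_self_eq_zero {G : Type*} [AddCommMonoid G]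
    (hbool : ∀ x : G, x + x = 0) (r s t : G) :
    mdeck (· + ·) ![r, s, t] = mdeck (· + ·) ![r, r + s, r + t] := by
  have cancel (x : G) : r + (r + x) = x := by rw [← add_assoc, hbool, zero_add]
  have sum_eq : (r + s) + (r + t) = s + t := by rw [add_add_add_comm, hbool, zero_add]
  rw [mdeck_fin_three, mdeck_fin_three, cancel, cancel, sum_eq,
    Multiset.pair_comm (r + t), Multiset.pair_comm (r + s)]
  exact Multiset.cons_swap _ _ _

theorem triple_ne_triple_add_left {G : Type*} [AddRightCancelMonoid G] {r s t : G}
    (hr : r ≠ 0) (hst : r + s ≠ t) :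
    ({r, s, t} : Multiset G) ≠ {r, r + s, r + t} := by
  rw [Ne, Multiset.insert_eq_cons, Multiset.insert_eq_cons r, Multiset.cons_inj_right,
    Multiset.insert_eq_cons, Multiset.insert_eq_cons, Multiset.cons_eq_cons]
  rintro (⟨hs, -⟩ | ⟨-, u, hu, -⟩)
  · exact hr (by simpa using hs.symm)
  · exact hst ((Multiset.singleton_eq_cons_iff _).mp hu).1.symm

theorem stmt9 {G : Type*} [AddCommGroup G] (hbool : ∀ x : G, x + x = 0)
    (r s t : G) :
    mdeck (· + ·) ![r, s, t] = mdeck (· + ·) ![r, r + s, r + t] ∧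
    (r ≠ 0 → r + s ≠ t →
      ({r, s, t} : Multiset G) ≠ ({r, r + s, r + t} : Multiset G)) :=
  ⟨mdeck_add_left_eq_of_add_self_eq_zero hbool r s t,
    fun hr hst => triple_ne_triple_add_left hr hst⟩
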